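/- With the graph G_c constructed from a bipartite graph H = (A ⊔ B, E) with colorings α : A → [Δs], β : B → [d] and parameters c, t, Δ, s as in the context, suppose there exist S ⊆ A and T ⊆ B such that |S| = Δs, |T| = d, α restricted to S is a bijection onto [Δs], β restricted to T is a bijection onto [d], and every vertex of S is adjacent in H to every vertex of T. Then T^c ∪ (S × [c] × [t]) is a dominating set of G_c, and hence G_c has a dominating set of size at most d^c + Δ·s·c·t. -/
import Mathlib


/-- A set `D` of vertices dominates a graph `G`: every vertex is in `D` or
adjacent to a vertex of `D`. -/
def IsDominatingSet {V : Type*} (G : SimpleGraph V) (D : Set V) : Prop :=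
  ∀ v : V, v ∈ D ∨ ∃ u ∈ D, G.Adj u v

/-- The vertex set of the graph `G_c`: the disjoint union of
`⋃_{i ∈ [d]^c} V_i = B^c` (a tuple `v ∈ B^c` lies in `V_i` for `i = β ∘ v`),
`C = A × [c] × [t]`, and `W = {w_{v,j,i} : v ∈ B^c, j ∈ [Δs]^c, i ∈ [t]}`. -/
abbrev GcVertex (A B : Type*) (c t Δ s : ℕ) : Type _ :=
  (Fin c → B) ⊕ ((A × Fin c × Fin t) ⊕
    ((Fin c → B) × (Fin c → Fin (Δ * s)) × Fin t))

/-- The defining relation for the edges of `G_c` (to be symmetrized):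
(E1) distinct `v, v'` of the same `V_i` (i.e. `β ∘ v = β ∘ v'`) are adjacent;
(E2) for `v, v'` in the same `V_i` with `v ℓ ≠ v' ℓ` for all `ℓ`, `w_{v,j,i}`
     is adjacent to `v'` for all `i ∈ [t]`, `j ∈ [Δs]^c`;
(E3) `(u, ℓ, i)` is adjacent to `w_{v,j,i}` if `E u (v ℓ)` and `j ℓ = α u`;
(E4) distinct `(u, ℓ, i), (u', ℓ, i)` with the same `ℓ, i` are adjacent. -/
def gcRel {A B : Type*} (c t Δ s d : ℕ) (α : A → Fin (Δ * s))
    (β : B → Fin d) (E : A → B → Prop) :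
    GcVertex A B c t Δ s → GcVertex A B c t Δ s → Prop
  | Sum.inl v, Sum.inl v' => v ≠ v' ∧ β ∘ v = β ∘ v'
  | Sum.inr (Sum.inr (v, _, _)), Sum.inl v' =>
      β ∘ v = β ∘ v' ∧ ∀ ℓ : Fin c, v ℓ ≠ v' ℓ
  | Sum.inr (Sum.inl (u, ℓ, i)), Sum.inr (Sum.inr (v, j, i')) =>
      i = i' ∧ E u (v ℓ) ∧ j ℓ = α u
  | Sum.inr (Sum.inl (u, ℓ, i)), Sum.inr (Sum.inl (u', ℓ', i')) =>
      u ≠ u' ∧ ℓ = ℓ' ∧ i = i'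
  | _, _ => False

/-- The graph `G_c` built from the bipartite graph `(A ⊔ B, E)` with colorings
`α : A → [Δs]`, `β : B → [d]` and parameters `c, t, Δ, s`. -/
def Gc {A B : Type*} (c t Δ s d : ℕ) (α : A → Fin (Δ * s))
    (β : B → Fin d) (E : A → B → Prop) :
    SimpleGraph (GcVertex A B c t Δ s) :=
  SimpleGraph.fromRel (gcRel c t Δ s d α β E)

/-- completeness of the product reduction.
If `S ⊆ A` with `|S| = Δs` and `T ⊆ B` with `|T| = d` are such that `α` is a
bijection from `S` onto `[Δs]`, `β` is a bijection from `T` onto `[d]`, and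
every vertex of `S` is adjacent in `H` to every vertex of `T`, then
`T^c ∪ (S × [c] × [t])` is a dominating set of `G_c`; hence `G_c` has a
dominating set of size at most `d^c + Δ·s·c·t`. -/
theorem completeness_Gc {A B : Type*} [Fintype A] [Fintype B]
    (c t Δ s d : ℕ) (hc : 0 < c) (ht : 0 < t) (hΔ : 0 < Δ) (hs : 0 < s)
    (hd : 0 < d)
    (α : A → Fin (Δ * s)) (β : B → Fin d) (E : A → B → Prop)
    (S : Finset A) (T : Finset B) (hS : S.card = Δ * s) (hT : T.card = d)
    (hα : Set.BijOn α ↑S (Set.univ : Set (Fin (Δ * s))))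
    (hβ : Set.BijOn β ↑T (Set.univ : Set (Fin d)))
    (hST : ∀ a ∈ S, ∀ b ∈ T, E a b) :
    IsDominatingSet (Gc c t Δ s d α β E)
      {x : GcVertex A B c t Δ s |
        (∃ v : Fin c → B, (∀ ℓ : Fin c, v ℓ ∈ T) ∧ x = Sum.inl v) ∨
        (∃ a ∈ S, ∃ ℓ : Fin c, ∃ i : Fin t, x = Sum.inr (Sum.inl (a, ℓ, i)))} ∧
    ∃ D : Set (GcVertex A B c t Δ s),
      IsDominatingSet (Gc c t Δ s d α β E) D ∧
      D.ncard ≤ d ^ c + Δ * s * c * t := by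

  classical
  have hβsurj : ∀ y : Fin d, ∃ b, b ∈ T ∧ β b = y := by
    intro y
    obtain ⟨b, hb, hby⟩ := hβ.surjOn (Set.mem_univ y)
    exact ⟨b, hb, hby⟩
  have hαsurj : ∀ y : Fin (Δ * s), ∃ a, a ∈ S ∧ α a = y := by
    intro y
    obtain ⟨a, ha, hay⟩ := hα.surjOn (Set.mem_univ y)
    exact ⟨a, ha, hay⟩
  have hdom : IsDominatingSet (Gc c t Δ s d α β E)
      {x : GcVertex A B c t Δ s |
        (∃ v : Fin c → B, (∀ ℓ : Fin c, v ℓ ∈ T) ∧ x = Sum.inl v) ∨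
        (∃ a ∈ S, ∃ ℓ : Fin c, ∃ i : Fin t, x = Sum.inr (Sum.inl (a, ℓ, i)))} := by
    intro x
    obtain v | (⟨u, ℓ, i⟩ | ⟨v, j, i⟩) := x
    · -- vertex in some V_i
      choose f hf hfβ using fun ℓ => hβsurj (β (v ℓ))
      by_cases hvf : f = v
      · exact Or.inl (Or.inl ⟨v, fun ℓ => hvf ▸ hf ℓ, rfl⟩)
      · refine Or.inr ⟨Sum.inl f, Or.inl ⟨f, hf, rfl⟩, ?_⟩
        rw [Gc, SimpleGraph.fromRel_adj]
        exact ⟨fun h => hvf (Sum.inl.inj h), Or.inl ⟨hvf, funext hfβ⟩⟩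
    · -- vertex in C
      by_cases hu : u ∈ S
      · exact Or.inl (Or.inr ⟨u, hu, ℓ, i, rfl⟩)
      · obtain ⟨a, ha, -⟩ := hαsurj ⟨0, Nat.mul_pos hΔ hs⟩
        refine Or.inr ⟨Sum.inr (Sum.inl (a, ℓ, i)), Or.inr ⟨a, ha, ℓ, i, rfl⟩, ?_⟩
        have hau : a ≠ u := fun h => hu (h ▸ ha)
        rw [Gc, SimpleGraph.fromRel_adj]
        refine ⟨fun h => hau ?_, Or.inl ⟨hau, rfl, rfl⟩⟩
        have := Sum.inr.inj h
        have := Sum.inl.inj this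
        exact congrArg Prod.fst this
    · -- vertex in W
      by_cases h : ∃ ℓ : Fin c, v ℓ ∈ T
      · obtain ⟨ℓ, hℓ⟩ := h
        obtain ⟨a, ha, haj⟩ := hαsurj (j ℓ)
        refine Or.inr ⟨Sum.inr (Sum.inl (a, ℓ, i)), Or.inr ⟨a, ha, ℓ, i, rfl⟩, ?_⟩
        rw [Gc, SimpleGraph.fromRel_adj]
        exact ⟨fun h => by simp at h, Or.inl ⟨rfl, hST a ha _ hℓ, haj.symm⟩⟩
      · push_neg at h
        choose f hf hfβ using fun ℓ => hβsurj (β (v ℓ))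
        refine Or.inr ⟨Sum.inl f, Or.inl ⟨f, hf, rfl⟩, ?_⟩
        rw [Gc, SimpleGraph.fromRel_adj]
        refine ⟨fun h => by simp at h, Or.inr ⟨(funext hfβ).symm, fun ℓ hℓ => h ℓ (hℓ ▸ hf ℓ)⟩⟩
  refine ⟨hdom, ⟨_, hdom, ?_⟩⟩
  -- cardinality bound
  have heq : {x : GcVertex A B c t Δ s |
        (∃ v : Fin c → B, (∀ ℓ : Fin c, v ℓ ∈ T) ∧ x = Sum.inl v) ∨
        (∃ a ∈ S, ∃ ℓ : Fin c, ∃ i : Fin t, x = Sum.inr (Sum.inl (a, ℓ, i)))}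
      = (Sum.inl '' ↑(Fintype.piFinset fun _ : Fin c => T)) ∪
        ((fun p : A × Fin c × Fin t => Sum.inr (Sum.inl p)) ''
          ↑(S ×ˢ (Finset.univ : Finset (Fin c × Fin t)))) := by
    ext x
    simp only [Set.mem_setOf_eq, Set.mem_union, Set.mem_image, 
      Set.mem_pi, Set.mem_univ, forall_true_left, Finset.coe_product, Set.mem_prod,
      Finset.mem_coe, Fintype.mem_piFinset]
    constructor
    · rintro (⟨v, hv, rfl⟩ | ⟨a, ha, ℓ, i, rfl⟩)
      · exact Or.inl ⟨v, hv, rfl⟩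
      · exact Or.inr ⟨(a, ℓ, i), ⟨ha, Finset.mem_univ _⟩, rfl⟩
    · rintro (⟨v, hv, rfl⟩ | ⟨⟨a, ℓ, i⟩, ⟨ha, -⟩, rfl⟩)
      · exact Or.inl ⟨v, hv, rfl⟩
      · exact Or.inr ⟨a, ha, ℓ, i, rfl⟩
  rw [heq]
  refine (Set.ncard_union_le _ _).trans ?_
  rw [Set.ncard_image_of_injective _ Sum.inl_injective,
    Set.ncard_image_of_injective _ (fun a b h => Sum.inl.inj (Sum.inr.inj h)),
    Set.ncard_coe_finset, Set.ncard_coe_finset, Fintype.card_piFinset,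
    Finset.card_product, hT, hS]
  simp [Fintype.card_prod, mul_assoc]
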